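/- arXiv:2406.04044 — 2 statements merged into one kernel-verified Lean document; each statement's English description precedes it below -/
import Mathlib

section
/- Let f be analytic on the open unit disk 𝔻 with f(0) = 0, f'(0) = 1, and f'(z) ≠ 0 for all z ∈ 𝔻. If |z² f'''(z)/f'(z) − 2 (z f''(z)/f'(z))²| < 1/2 for all z ∈ 𝔻, then Re(1 + z f''(z)/f'(z)) > 0 for all z ∈ 𝔻, i.e., f is convex. -/
/-!
Put `h z = 1 + z f''(z) / f'(z)`, so that `h 0 = 1` and
`z h' - h² + h = z² f'''/f' - 2 (z f''/f')²`.
If `Re h` is not positive on the disk, take a point `z₀` of least modulus with `Re h z₀ ≤ 0`; then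
`Re h ≥ 0` on `|z| ≤ |z₀|` and `h z₀ = i t` with `t` real. The Cayley transform
`ω = (1 - h) / (1 + h)` satisfies `ω 0 = 0`, `|ω| ≤ 1` on that disk and `|ω z₀| = 1`, so by Jack's
lemma `z₀ ω'(z₀) = k ω(z₀)` for some real `k ≥ 1`, that is `z₀ h'(z₀) = -k (1 + t²) / 2`. Hence
`z₀ h' - h² + h = -k (1 + t²) / 2 + t² + i t` at `z₀`, and this has modulus at least `1 / 2`.

Jack's lemma itself: `|ω|²` restricted to the circle `|z| = |z₀|` is maximal at `z₀`, which makes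
`conj (ω z₀) z₀ ω'(z₀)` real, and along the radius Schwarz's lemma gives `|ω (u z₀)| ≤ u`, which
makes it at least `1`.
-/

open Complex Metric Set Filter ComplexConjugate

theorem exists_zero_nonneg_on_closedBall_norm {E : Type*} [NormedAddCommGroup E] [NormedSpace ℝ E]
    [ProperSpace E] {g : E → ℝ} {R : ℝ} {z₁ : E} (hg : ContinuousOn g (ball 0 R)) (hg0 : 0 < g 0)
    (hz₁ : z₁ ∈ ball 0 R) (hgz₁ : g z₁ ≤ 0) :
    ∃ z₀ ∈ ball (0 : E) R, g z₀ = 0 ∧ ∀ z ∈ closedBall (0 : E) ‖z₀‖, 0 ≤ g z := by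
  have hsub : closedBall (0 : E) ‖z₁‖ ⊆ ball 0 R := closedBall_subset_ball (mem_ball_zero_iff.1 hz₁)
  have hA : IsCompact (closedBall (0 : E) ‖z₁‖ ∩ g ⁻¹' Iic 0) :=
    (isCompact_closedBall 0 _).of_isClosed_subset
      ((hg.mono hsub).preimage_isClosed_of_isClosed isClosed_closedBall isClosed_Iic)
      inter_subset_left
  obtain ⟨z₀, ⟨hz₀, hgz₀⟩, hmin⟩ :=
    hA.exists_isMinOn ⟨z₁, by simp, hgz₁⟩ continuous_norm.continuousOn
  have hpos : ∀ z ∈ ball (0 : E) ‖z₀‖, 0 < g z := fun z hz => by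
    by_contra! hgz
    have hz' := mem_ball_zero_iff.1 hz
    exact hz'.not_ge
      (hmin ⟨mem_closedBall_zero_iff.2 (hz'.le.trans (mem_closedBall_zero_iff.1 hz₀)), hgz⟩)
  have hz₀ne : z₀ ≠ 0 := by rintro rfl; exact hgz₀.not_gt hg0
  have hnonneg : ∀ z ∈ closedBall (0 : E) ‖z₀‖, 0 ≤ g z := by
    have hclosed : IsClosed (closedBall (0 : E) ‖z₀‖ ∩ g ⁻¹' Ici 0) :=
      (hg.mono ((closedBall_subset_closedBall (mem_closedBall_zero_iff.1 hz₀)).trans hsub)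
        ).preimage_isClosed_of_isClosed isClosed_closedBall isClosed_Ici
    rw [← closure_ball 0 (norm_ne_zero_iff.2 hz₀ne)]
    exact fun z hz => (hclosed.closure_subset_iff.2
      (fun w hw => ⟨ball_subset_closedBall hw, (hpos w hw).le⟩) hz).2
  exact ⟨z₀, hsub hz₀, le_antisymm hgz₀ (hnonneg z₀ (by simp)), hnonneg⟩

section Jack

variable {ω : ℂ → ℂ} {ω' z₀ : ℂ}

theorem im_conj_mul_mul_eq_zero_of_max_on_circle (hd : HasDerivAt ω ω' z₀)
    (hmax : ∀ θ : ℝ, ‖ω (z₀ * exp (θ * I))‖ ≤ ‖ω z₀‖) :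
    (conj (ω z₀) * (z₀ * ω')).im = 0 := by
  have hcircle : HasDerivAt (fun θ : ℝ => ω (z₀ * exp (θ * I))) (ω' * (z₀ * I)) 0 := by
    have hrot : HasDerivAt (fun w : ℂ => z₀ * exp (w * I)) (z₀ * I) 0 := by
      simpa using (((hasDerivAt_id (0 : ℂ)).mul_const I).cexp).const_mul z₀
    simpa using ((show HasDerivAt ω ω' (z₀ * exp (0 * I)) by simpa using hd).comp
      ((0 : ℝ) : ℂ) (by simpa using hrot)).comp_ofReal
  have hloc : IsLocalMax (fun θ : ℝ => ‖ω (z₀ * exp (θ * I))‖ ^ 2) 0 :=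
    Eventually.of_forall fun θ => by simpa using pow_le_pow_left₀ (norm_nonneg _) (hmax θ) 2
  have := hloc.hasDerivAt_eq_zero hcircle.norm_sq
  have hre : 2 * (ω' * (z₀ * I) * conj (ω z₀)).re = 0 := by
    simpa only [ofReal_zero, zero_mul, exp_zero, mul_one, Complex.inner] using this
  rw [show ω' * (z₀ * I) * conj (ω z₀) = conj (ω z₀) * (z₀ * ω') * I by ring, mul_I_re] at hre
  linarith

theorem one_le_re_conj_mul_mul_of_norm_le_on_ray (hd : HasDerivAt ω ω' z₀) (hz₀ : ‖ω z₀‖ = 1)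
    (hray : ∀ u ∈ Ioo (0 : ℝ) 1, ‖ω (u * z₀)‖ ≤ u) :
    1 ≤ (conj (ω z₀) * (z₀ * ω')).re := by
  have hψ : HasDerivAt (fun u : ℝ => ω (u * z₀)) (ω' * z₀) 1 := by
    simpa using ((show HasDerivAt ω ω' (((1 : ℝ) : ℂ) * z₀) by simpa using hd).comp
      ((1 : ℝ) : ℂ) ((hasDerivAt_id _).mul_const z₀)).comp_ofReal
  have hχ := (hasDerivAt_pow 2 (1 : ℝ)).sub hψ.norm_sq
  have hmin : IsLocalMinOn (fun u : ℝ => u ^ 2 - ‖ω (u * z₀)‖ ^ 2) (Iic 1) 1 := by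
    filter_upwards [Ioc_mem_nhdsLE zero_lt_one] with u ⟨hu0, hu1⟩
    rcases hu1.lt_or_eq with hu1 | rfl
    · have := pow_le_pow_left₀ (norm_nonneg _) (hray u ⟨hu0, hu1⟩) 2
      simp only [ofReal_one, one_mul, hz₀]
      linarith
    · simp
  have := hmin.hasFDerivWithinAt_nonneg hχ.hasFDerivAt.hasFDerivWithinAt
    (mem_posTangentConeAt_of_segment_subset (y := -1)
      (by simp [segment_symm, segment_eq_Icc, Icc_subset_Iic_self]))
  have hre : 0 ≤ -(2 - 2 * (ω' * z₀ * conj (ω z₀)).re) := by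
    simpa [Complex.inner] using this
  rw [show ω' * z₀ * conj (ω z₀) = conj (ω z₀) * (z₀ * ω') by ring] at hre
  linarith

theorem jack_lemma (hω : DifferentiableOn ℂ ω (ball 0 ‖z₀‖)) (hd : DifferentiableAt ℂ ω z₀)
    (hω0 : ω 0 = 0) (hle : ∀ z ∈ closedBall (0 : ℂ) ‖z₀‖, ‖ω z‖ ≤ 1) (hz₀ : ‖ω z₀‖ = 1) :
    ∃ k : ℝ, 1 ≤ k ∧ z₀ * deriv ω z₀ = k * ω z₀ := by
  have hr : 0 < ‖z₀‖ := norm_pos_iff.2 fun h => by simp [h, hω0] at hz₀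
  have hray : ∀ u ∈ Ioo (0 : ℝ) 1, ‖ω (u * z₀)‖ ≤ u := fun u ⟨hu0, hu1⟩ => by
    have hnorm : ‖(u : ℂ) * z₀‖ = ‖z₀‖ * u := by simp [abs_of_pos hu0, mul_comm]
    have hmem : (u : ℂ) * z₀ ∈ ball 0 ‖z₀‖ := by
      rw [mem_ball_zero_iff, hnorm]; exact mul_lt_of_lt_one_right hr hu1
    have := Complex.dist_le_div_mul_dist_of_mapsTo_ball hω
      (fun z hz => by
        rw [hω0, mem_closedBall_zero_iff]; exact hle z (ball_subset_closedBall hz)) hmem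
    rwa [hω0, dist_zero_right, dist_zero_right, hnorm, one_div, inv_mul_cancel_left₀ hr.ne'] at this
  have hmax : ∀ θ : ℝ, ‖ω (z₀ * exp (θ * I))‖ ≤ ‖ω z₀‖ := fun θ =>
    hz₀ ▸ hle _ (by simp)
  set D := conj (ω z₀) * (z₀ * deriv ω z₀)
  have hDim := im_conj_mul_mul_eq_zero_of_max_on_circle hd.hasDerivAt hmax
  refine ⟨D.re, one_le_re_conj_mul_mul_of_norm_le_on_ray hd.hasDerivAt hz₀ hray, ?_⟩
  have hD : (D.re : ℂ) = D := ext rfl (by rw [ofReal_im, hDim])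
  have hunit : ω z₀ * conj (ω z₀) = 1 := by simp [mul_conj', hz₀]
  rw [hD]
  linear_combination (-(z₀ * deriv ω z₀)) * hunit

end Jack

section Cayley

variable {w : ℂ}

theorem one_add_ne_zero_of_re_nonneg (hw : 0 ≤ w.re) : 1 + w ≠ 0 := fun h => by
  have := congrArg re h
  simp only [add_re, one_re, zero_re] at this
  linarith

theorem norm_one_sub_div_one_add_le_one (hw : 0 ≤ w.re) : ‖(1 - w) / (1 + w)‖ ≤ 1 := by
  rw [norm_div, div_le_one (norm_pos_iff.2 (one_add_ne_zero_of_re_nonneg hw)),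
    ← sq_le_sq₀ (norm_nonneg _) (norm_nonneg _), Complex.sq_norm, Complex.sq_norm]
  simp only [normSq_apply, sub_re, sub_im, add_re, add_im, one_re, one_im]
  nlinarith

theorem norm_one_sub_div_one_add_eq_one (hw : w.re = 0) : ‖(1 - w) / (1 + w)‖ = 1 := by
  rw [norm_div, div_eq_one_iff_eq (norm_ne_zero_iff.2 (one_add_ne_zero_of_re_nonneg hw.ge)),
    ← sq_eq_sq₀ (norm_nonneg _) (norm_nonneg _), Complex.sq_norm, Complex.sq_norm]
  simp only [normSq_apply, sub_re, sub_im, add_re, add_im, one_re, one_im, hw]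
  ring

end Cayley

theorem half_le_norm_of_one_le {k : ℝ} (hk : 1 ≤ k) (t : ℝ) :
    1 / 2 ≤ ‖((-(k * (1 + t ^ 2)) / 2 + t ^ 2 : ℝ) : ℂ) + t * I‖ := by
  rw [norm_add_mul_I, Real.le_sqrt (by norm_num) (by positivity)]
  nlinarith [sq_nonneg ((k - 1) * (1 + t ^ 2) / 2 + (1 - t ^ 2) / 2),
    mul_nonneg (sub_nonneg.2 hk) (sq_nonneg t)]

theorem re_pos_of_norm_mul_deriv_sub_sq_add_lt {h : ℂ → ℂ} (hh : DifferentiableOn ℂ h (ball 0 1))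
    (h0 : h 0 = 1) (hs : ∀ z ∈ ball (0 : ℂ) 1, ‖z * deriv h z - h z ^ 2 + h z‖ < 1 / 2) :
    ∀ z ∈ ball (0 : ℂ) 1, 0 < (h z).re := by
  intro z₁ hz₁
  by_contra! hz₁le
  obtain ⟨z₀, hz₀, hre, hnonneg⟩ := exists_zero_nonneg_on_closedBall_norm (g := fun z => (h z).re)
    (continuous_re.comp_continuousOn hh.continuousOn) (by simp [h0]) hz₁ hz₁le
  have hsub : closedBall (0 : ℂ) ‖z₀‖ ⊆ ball 0 1 := closedBall_subset_ball (mem_ball_zero_iff.1 hz₀)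
  have hh' : ∀ z ∈ closedBall (0 : ℂ) ‖z₀‖, HasDerivAt h (deriv h z) z := fun z hz =>
    (hh.differentiableAt (isOpen_ball.mem_nhds (hsub hz))).hasDerivAt
  have hω : ∀ z ∈ closedBall (0 : ℂ) ‖z₀‖, HasDerivAt (fun z => (1 - h z) / (1 + h z))
      (-2 * deriv h z / (1 + h z) ^ 2) z := fun z hz => by
    refine (((hh' z hz).const_sub 1).div ((hh' z hz).const_add 1)
      (one_add_ne_zero_of_re_nonneg (hnonneg z hz))).congr_deriv ?_
    ring
  obtain ⟨k, hk, hjack⟩ := jack_lemma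
    (fun z hz => (hω z (ball_subset_closedBall hz)).differentiableAt.differentiableWithinAt)
    (hω z₀ (mem_closedBall_zero_iff.2 le_rfl)).differentiableAt (by simp [h0])
    (fun z hz => norm_one_sub_div_one_add_le_one (hnonneg z hz))
    (norm_one_sub_div_one_add_eq_one hre)
  rw [(hω z₀ (mem_closedBall_zero_iff.2 le_rfl)).deriv] at hjack
  set t := (h z₀).im
  have hz₀t : h z₀ = t * I := ext (by simp [hre]) (by simp [t])
  have hne : 1 + (t : ℂ) * I ≠ 0 := hz₀t ▸ one_add_ne_zero_of_re_nonneg hre.ge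
  rw [hz₀t] at hjack
  field_simp at hjack
  have hval : z₀ * deriv h z₀ - h z₀ ^ 2 + h z₀ =
      ((-(k * (1 + t ^ 2)) / 2 + t ^ 2 : ℝ) : ℂ) + t * I := by
    push_cast
    rw [hz₀t]
    linear_combination (-1/2) * hjack + ((t : ℂ) ^ 2 * ((k : ℂ) / 2 - 1)) * I_sq
  exact (hs z₀ hz₀).not_ge (hval ▸ half_le_norm_of_one_le hk t)

theorem stmt_7_general (f : ℂ → ℂ)
    (hf : AnalyticOnNhd ℂ f (ball (0 : ℂ) 1))
    (hf'ne : ∀ z ∈ ball (0 : ℂ) 1, deriv f z ≠ 0)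
    (hineq : ∀ z ∈ ball (0 : ℂ) 1,
      ‖z ^ 2 * deriv (deriv (deriv f)) z / deriv f z
        - 2 * (z * deriv (deriv f) z / deriv f z) ^ 2‖ < 1 / 2) :
    ∀ z ∈ ball (0 : ℂ) 1, 0 < (1 + z * deriv (deriv f) z / deriv f z).re := by
  have hderiv : ∀ z ∈ ball (0 : ℂ) 1,
      HasDerivAt (fun w => 1 + w * deriv (deriv f) w / deriv f w)
        ((deriv (deriv f) z + z * deriv (deriv (deriv f)) z) / deriv f z
          - z * deriv (deriv f) z ^ 2 / deriv f z ^ 2) z := fun z hz => by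
    have hf' := (hf.deriv z hz).differentiableAt.hasDerivAt
    have hf'' := (hf.deriv.deriv z hz).differentiableAt.hasDerivAt
    refine ((((hasDerivAt_id' z).mul hf'').div hf' (hf'ne z hz)).const_add 1).congr_deriv ?_
    simp only [Pi.mul_apply]
    field_simp [hf'ne z hz]
  refine re_pos_of_norm_mul_deriv_sub_sq_add_lt
    (fun z hz => (hderiv z hz).differentiableAt.differentiableWithinAt) (by simp) fun z hz => ?_
  rw [(hderiv z hz).deriv]
  convert hineq z hz using 2
  field_simp [hf'ne z hz]
  ring

/-- **Corollary 2 (ii).** If `f ∈ 𝒜`, `f' ≠ 0` on the disk, and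
`|z² f'''/f' − 2 (z f''/f')²| < 1/2` on the disk, then `f` is convex. -/
theorem stmt_7 (f : ℂ → ℂ)
    (hf : AnalyticOnNhd ℂ f (ball (0 : ℂ) 1))
    (hf0 : f 0 = 0) (hf'0 : deriv f 0 = 1)
    (hf'ne : ∀ z ∈ ball (0 : ℂ) 1, deriv f z ≠ 0)
    (hineq : ∀ z ∈ ball (0 : ℂ) 1,
      ‖z ^ 2 * deriv (deriv (deriv f)) z / deriv f z
        - 2 * (z * deriv (deriv f) z / deriv f z) ^ 2‖ < 1 / 2) :
    ∀ z ∈ ball (0 : ℂ) 1, 0 < (1 + z * deriv (deriv f) z / deriv f z).re :=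
  stmt_7_general f hf hf'ne hineq
end

section
/- Let f be analytic on the open unit disk 𝔻 with f(0) = 0 and f'(0) = 1. If |f'(z) − (f(z)/z)²| < 1/2 for all z ∈ 𝔻 \ {0}, then Re(f(z)/z) > 0 for all z ∈ 𝔻 \ {0}. -/
/-!
Write `p z = f z / z`, so `p 0 = 1` and `f' - (f / z) ^ 2 = p + z p' - p ^ 2`. If `Re p` is not
positive, let `z₀` be a point of least modulus with `Re p z₀ ≤ 0`; then `p z₀ = i y` and the Cayley
transform `w = (1 - p) / (1 + p)` maps the disk of radius `|z₀|` into the closed unit disk with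
`w 0 = 0` and `|w z₀| = 1`. Jack's lemma (Schwarz's lemma along the radius through `z₀`, maximality
of `|w|` along the circle) gives `z₀ w'(z₀) = k w(z₀)` with real `k ≥ 1`, that is
`z₀ p'(z₀) = -k (1 + y ^ 2) / 2`. Then `f' - (f / z) ^ 2` at `z₀` has real part
`y ^ 2 - k (1 + y ^ 2) / 2` and imaginary part `y`, hence modulus at least `1 / 2`.
-/

open Complex ComplexConjugate Metric Set Filter Topology

lemma norm_one_sub_div_one_add_le_one_s9 {u : ℂ} (hu : 0 ≤ u.re) : ‖(1 - u) / (1 + u)‖ ≤ 1 := by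
  rw [norm_div]
  refine div_le_one_of_le₀ ?_ (norm_nonneg _)
  rw [← sq_le_sq₀ (norm_nonneg _) (norm_nonneg _), Complex.sq_norm, Complex.sq_norm]
  simp only [normSq_apply, sub_re, add_re, sub_im, add_im, one_re, one_im]
  nlinarith

lemma norm_one_sub_div_one_add_eq_one_s9 {u : ℂ} (hu : u.re = 0) : ‖(1 - u) / (1 + u)‖ = 1 := by
  have hne : 1 + u ≠ 0 := fun h => by simpa [hu] using congrArg re h
  rw [norm_div, div_eq_one_iff_eq (norm_ne_zero_iff.mpr hne),
    ← sq_eq_sq₀ (norm_nonneg _) (norm_nonneg _), Complex.sq_norm, Complex.sq_norm]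
  simp only [normSq_apply, sub_re, add_re, sub_im, add_im, one_re, one_im, hu]
  ring

lemma half_le_norm_sub_sub_sq_of_re_eq_zero {q : ℂ} {k : ℝ} (hq : q.re = 0) (hk : 1 ≤ k) :
    1 / 2 ≤ ‖q - k * (1 - q ^ 2) / 2 - q ^ 2‖ := by
  obtain ⟨y, rfl⟩ : ∃ y : ℝ, q = y * I := ⟨q.im, by simpa [hq] using (re_add_im q).symm⟩
  have hsq : ‖(y : ℂ) * I - k * (1 - (y * I) ^ 2) / 2 - (y * I) ^ 2‖ ^ 2
      = (y ^ 2 - k * (1 + y ^ 2) / 2) ^ 2 + y ^ 2 := by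
    have hform : (y : ℂ) * I - k * (1 - (y * I) ^ 2) / 2 - (y * I) ^ 2
        = ((y ^ 2 - k * (1 + y ^ 2) / 2 : ℝ) : ℂ) + y * I := by
      push_cast
      linear_combination ((k : ℂ) * y ^ 2 / 2 - y ^ 2) * I_sq
    rw [hform, Complex.sq_norm, normSq_add_mul_I]
  refine le_of_pow_le_pow_left₀ two_ne_zero (norm_nonneg _) ?_
  rw [hsq]
  -- For `y ^ 2 ≤ 1` the first square is at least `((1 - y ^ 2) / 2) ^ 2`,
  -- so the sum is at least `((1 + y ^ 2) / 2) ^ 2`.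
  rcases le_or_gt (y ^ 2) 1 with hy | hy
  · have h : (1 - y ^ 2) / 2 ≤ k * (1 + y ^ 2) / 2 - y ^ 2 := by nlinarith
    nlinarith [mul_self_le_mul_self (by linarith : (0:ℝ) ≤ (1 - y ^ 2) / 2) h]
  · nlinarith [sq_nonneg (y ^ 2 - k * (1 + y ^ 2) / 2)]

lemma le_re_mul_deriv_of_re_le {F : ℂ → ℂ} {z₀ : ℂ} {c : ℝ} (hF : DifferentiableAt ℂ F z₀)
    (hc : (F z₀).re = c) (hle : ∀ t ∈ Ioo (0 : ℝ) 1, (F (t * z₀)).re ≤ t * c) :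
    c ≤ (z₀ * deriv F z₀).re := by
  have hray : HasDerivAt (fun s : ℂ => F (s * z₀)) (deriv F z₀ * z₀) ((1 : ℝ) : ℂ) := by
    have hF' : HasDerivAt F (deriv F z₀) (((1 : ℝ) : ℂ) * z₀) := by simpa using hF.hasDerivAt
    exact hF'.comp ((1 : ℝ) : ℂ) (hasDerivAt_mul_const z₀)
  have hslope := hasDerivAt_iff_tendsto_slope.mp hray.real_of_complex
  rw [mul_comm]
  refine ge_of_tendsto (hslope.mono_left (nhdsLT_le_nhdsNE 1)) ?_
  filter_upwards [Ioo_mem_nhdsLT (zero_lt_one' ℝ)] with t ht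
  rw [slope_def_field, le_div_iff_of_neg (by linarith [ht.2])]
  simpa [hc] using (by nlinarith [hle t ht] : (F (t * z₀)).re - c ≤ c * (t - 1))

lemma im_mul_deriv_eq_zero_of_isMaxOn {F : ℂ → ℂ} {z₀ : ℂ} (hF : DifferentiableAt ℂ F z₀)
    (hmax : IsMaxOn (fun z => (F z).re) (sphere 0 ‖z₀‖) z₀) :
    (z₀ * deriv F z₀).im = 0 := by
  have hcircle : HasDerivAt (fun s : ℂ => F (z₀ * exp (s * I))) (deriv F z₀ * (z₀ * I))
      ((0 : ℝ) : ℂ) := by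
    have hF' : HasDerivAt F (deriv F z₀) (z₀ * exp (((0 : ℝ) : ℂ) * I)) := by
      simpa using hF.hasDerivAt
    simpa [Function.comp_def] using
      hF'.comp ((0 : ℝ) : ℂ) (((hasDerivAt_mul_const I).cexp).const_mul z₀)
  have hlocmax : IsLocalMax (fun θ : ℝ => (F (z₀ * exp (θ * I))).re) 0 :=
    Eventually.of_forall fun θ => by
      simpa using hmax (by simp [norm_exp_ofReal_mul_I] : z₀ * exp (θ * I) ∈ sphere 0 ‖z₀‖)
  have h := hlocmax.hasDerivAt_eq_zero hcircle.real_of_complex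
  rw [show deriv F z₀ * (z₀ * I) = z₀ * deriv F z₀ * I by ring, mul_I_re] at h
  linarith

theorem jack_lemma_s9 {w : ℂ → ℂ} {z₀ : ℂ} (hw : DifferentiableOn ℂ w (ball 0 ‖z₀‖))
    (hwz₀ : DifferentiableAt ℂ w z₀) (hw0 : w 0 = 0)
    (hmaps : MapsTo w (closedBall 0 ‖z₀‖) (closedBall 0 1)) (hnorm : ‖w z₀‖ = 1) :
    ∃ k : ℝ, 1 ≤ k ∧ z₀ * deriv w z₀ = k * w z₀ := by
  have hr : 0 < ‖z₀‖ := norm_pos_iff.mpr fun h => by simp [h, hw0] at hnorm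
  -- Rotating `w` so that its value at `z₀` is `1` turns `|w| ≤ 1` into a bound on the real part.
  set u : ℂ → ℂ := fun z => conj (w z₀) * w z with hu
  have hre_le : ∀ z, (u z).re ≤ ‖w z‖ := fun z =>
    (re_le_norm (u z)).trans_eq (by simp [hu, hnorm])
  have hconj : conj (w z₀) * w z₀ = 1 := by
    rw [mul_comm, mul_conj, normSq_eq_norm_sq, hnorm]; simp
  have hu₀ : u z₀ = 1 := hconj
  have hderiv : z₀ * deriv u z₀ = conj (w z₀) * (z₀ * deriv w z₀) := by
    rw [hu, deriv_const_mul _ hwz₀]; ring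
  have hmax : IsMaxOn (fun z => (u z).re) (sphere 0 ‖z₀‖) z₀ := fun z hz => by
    have := hre_le z
    simp only [mem_ofPred_eq, hu₀, one_re]
    linarith [mem_closedBall_zero_iff.mp (hmaps (sphere_subset_closedBall hz))]
  have hradial : ∀ t ∈ Ioo (0 : ℝ) 1, (u (t * z₀)).re ≤ t * (u z₀).re := fun t ht => by
    have hmem : (t : ℂ) * z₀ ∈ ball 0 ‖z₀‖ := by
      rw [mem_ball_zero_iff, norm_mul, norm_real, Real.norm_of_nonneg ht.1.le]
      nlinarith [ht.2]
    have hschwarz := dist_le_div_mul_dist_of_mapsTo_ball hw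
      (by rw [hw0]; exact (hmaps.mono_left ball_subset_closedBall)) hmem
    rw [hw0, dist_zero_right, dist_zero_right, norm_mul, norm_real,
      Real.norm_of_nonneg ht.1.le, div_mul_eq_mul_div, one_mul, mul_div_assoc,
      div_self hr.ne', mul_one] at hschwarz
    rw [hu₀, one_re, mul_one]
    exact (hre_le _).trans hschwarz
  have hud : DifferentiableAt ℂ u z₀ := hwz₀.const_mul _
  have him := im_mul_deriv_eq_zero_of_isMaxOn hud hmax
  have hre := le_re_mul_deriv_of_re_le hud rfl hradial
  rw [hu₀, one_re] at hre
  refine ⟨(z₀ * deriv u z₀).re, hre, ?_⟩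
  have hreal : ((z₀ * deriv u z₀).re : ℂ) = z₀ * deriv u z₀ := by
    apply Complex.ext <;> simp [him]
  rw [hreal, hderiv]
  linear_combination (-(z₀ * deriv w z₀)) * hconj

lemma exists_norm_minimal_of_nonpos {E : Type*} [NormedAddCommGroup E] [ProperSpace E]
    {φ : E → ℝ} {R : ℝ} (hφ : ContinuousOn φ (ball 0 R)) {z₁ : E} (hz₁ : z₁ ∈ ball 0 R)
    (hle : φ z₁ ≤ 0) : ∃ z₀ ∈ ball (0 : E) R, φ z₀ ≤ 0 ∧ ∀ z, ‖z‖ < ‖z₀‖ → 0 < φ z := by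
  have hsub : closedBall (0 : E) ‖z₁‖ ⊆ ball 0 R :=
    closedBall_subset_ball (mem_ball_zero_iff.mp hz₁)
  set S := closedBall (0 : E) ‖z₁‖ ∩ φ ⁻¹' Iic 0
  have hS : IsCompact S := (isCompact_closedBall _ _).of_isClosed_subset
    ((hφ.mono hsub).preimage_isClosed_of_isClosed isClosed_closedBall isClosed_Iic)
    inter_subset_left
  have hz₁S : z₁ ∈ S := ⟨by simp, hle⟩
  obtain ⟨z₀, ⟨hz₀, hφz₀⟩, hmin⟩ := hS.exists_isMinOn ⟨z₁, hz₁S⟩ continuous_norm.continuousOn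
  refine ⟨z₀, hsub hz₀, hφz₀, fun z hz => ?_⟩
  by_contra! hφz
  have hzS : z ∈ S := ⟨by simp only [mem_closedBall_zero_iff] at hz₀ ⊢; linarith, hφz⟩
  exact (hmin hzS).not_gt hz

theorem exists_re_eq_zero_mul_deriv_eq {p : ℂ → ℂ} {R : ℝ} (hp : DifferentiableOn ℂ p (ball 0 R))
    (hp0 : p 0 = 1) {z₁ : ℂ} (hz₁ : z₁ ∈ ball 0 R) (hre : (p z₁).re ≤ 0) :
    ∃ z₀ ∈ ball (0 : ℂ) R, z₀ ≠ 0 ∧ (p z₀).re = 0 ∧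
      ∃ k : ℝ, 1 ≤ k ∧ z₀ * deriv p z₀ = -(k * (1 - p z₀ ^ 2) / 2) := by
  obtain ⟨z₀, hz₀, hle, hpos⟩ :=
    exists_norm_minimal_of_nonpos (continuous_re.comp_continuousOn hp.continuousOn) hz₁ hre
  have hz₀ne : z₀ ≠ 0 := by rintro rfl; norm_num [hp0] at hle
  have hdiff : ∀ z ∈ closedBall (0 : ℂ) ‖z₀‖, DifferentiableAt ℂ p z := fun z hz =>
    hp.differentiableAt (isOpen_ball.mem_nhds
      (closedBall_subset_ball (mem_ball_zero_iff.mp hz₀) hz))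
  have hnonneg : ∀ z ∈ closedBall (0 : ℂ) ‖z₀‖, 0 ≤ (p z).re := by
    rw [← closure_ball 0 (norm_ne_zero_iff.mpr hz₀ne)]
    refine le_on_closure (fun z hz => (hpos z (mem_ball_zero_iff.mp hz)).le) continuousOn_const
      (continuous_re.comp_continuousOn fun z hz => ?_)
    rw [closure_ball 0 (norm_ne_zero_iff.mpr hz₀ne)] at hz
    exact (hdiff z hz).continuousAt.continuousWithinAt
  have hre0 : (p z₀).re = 0 := le_antisymm hle (hnonneg z₀ (by simp))
  have hne : ∀ z ∈ closedBall (0 : ℂ) ‖z₀‖, 1 + p z ≠ 0 := fun z hz h => by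
    have := congrArg re h
    simp only [add_re, one_re, zero_re] at this
    linarith [hnonneg z hz]
  set W : ℂ → ℂ := fun z => (1 - p z) / (1 + p z)
  have hWd : ∀ z ∈ closedBall (0 : ℂ) ‖z₀‖, DifferentiableAt ℂ W z := fun z hz =>
    ((differentiableAt_const _).sub (hdiff z hz)).div
      ((differentiableAt_const _).add (hdiff z hz)) (hne z hz)
  have hz₀mem : z₀ ∈ closedBall (0 : ℂ) ‖z₀‖ := by simp
  obtain ⟨k, hk, hjack⟩ := jack_lemma_s9
    (fun z hz => (hWd z (ball_subset_closedBall hz)).differentiableWithinAt) (hWd z₀ hz₀mem)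
    (by simp [W, hp0])
    (fun z hz => mem_closedBall_zero_iff.mpr (norm_one_sub_div_one_add_le_one_s9 (hnonneg z hz)))
    (norm_one_sub_div_one_add_eq_one_s9 hre0)
  have hp' := (hdiff z₀ hz₀mem).hasDerivAt
  have hW' : HasDerivAt W _ z₀ := (hp'.const_sub 1).div (hp'.const_add 1) (hne z₀ hz₀mem)
  rw [hW'.deriv] at hjack
  refine ⟨z₀, hz₀, hz₀ne, hre0, k, hk, ?_⟩
  rw [show W z₀ = (1 - p z₀) / (1 + p z₀) from rfl] at hjack
  field_simp [hne z₀ hz₀mem] at hjack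
  linear_combination (-1 / 2 : ℂ) * hjack

/-- **Corollary 2 (iv).** If `f ∈ 𝒜` and `|f' − (f/z)²| < 1/2` on the punctured disk,
then `Re (f(z)/z) > 0` on the punctured disk. -/
theorem stmt_9 (f : ℂ → ℂ)
    (hf : AnalyticOnNhd ℂ f (ball (0 : ℂ) 1))
    (hf0 : f 0 = 0) (hf'0 : deriv f 0 = 1)
    (hineq : ∀ z ∈ ball (0 : ℂ) 1, z ≠ 0 →
      ‖deriv f z - (f z / z) ^ 2‖ < 1 / 2) :
    ∀ z ∈ ball (0 : ℂ) 1, z ≠ 0 → 0 < (f z / z).re := by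
  set p := dslope f 0
  have hfp : f = fun z => z * p z := funext fun z => by
    simpa [hf0] using (sub_smul_dslope f 0 z).symm
  have hpf : ∀ z ≠ 0, p z = f z / z := fun z hz => by
    rw [hfp]; field_simp
  have hp : DifferentiableOn ℂ p (ball 0 1) :=
    (differentiableOn_dslope (ball_mem_nhds 0 one_pos)).mpr hf.differentiableOn
  intro z hz hz0
  by_contra! hre
  rw [← hpf z hz0] at hre
  obtain ⟨z₀, hz₀, hz₀ne, hre0, k, hk, hderiv⟩ :=
    exists_re_eq_zero_mul_deriv_eq hp ((dslope_same f 0).trans hf'0) hz hre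
  have hf' : deriv f z₀ = p z₀ + z₀ * deriv p z₀ := by
    rw [hfp, deriv_fun_mul (c := fun z => z) differentiableAt_id
      (hp.differentiableAt (isOpen_ball.mem_nhds hz₀)), deriv_id'', one_mul]
  have := hineq z₀ hz₀ hz₀ne
  rw [hf', ← hpf z₀ hz₀ne, hderiv, ← sub_eq_add_neg] at this
  linarith [half_le_norm_sub_sub_sq_of_re_eq_zero hre0 hk]
end
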